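/- For the case β = 0, γ = 1: if x solves ẋ₁ = -x₂x₃, ẋ₂ = x₁x₃ - ½(x₁²+x₂²)x₂, ẋ₃ = -x₂²x₃ and ∫₀^∞ x₂(s)² ds = ∞, then x(t) → (0,0,0) as t → ∞. -/

import Mathlib

/-!
Along solutions the Lyapunov function `V = ⅛(x₁² + x₂²)² + ½x₃²` satisfies `V' = -2x₂²V`,
so `V(t) = V(0) exp(-2∫₀ᵗ x₂²)`, which tends to `0` when `∫₀^∞ x₂² = ∞`. Since `V` bounds
`x₁⁴`, `x₂⁴` and `x₃²` up to constants, the state tends to the origin.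
-/

open Filter Real Topology

theorem Filter.Tendsto.of_pow_nhds_zero {α : Type*} {l : Filter α} {f : α → ℝ} {n : ℕ}
    (hn : n ≠ 0) (h : Tendsto (fun a => f a ^ n) l (𝓝 0)) : Tendsto f l (𝓝 0) := by
  rw [Metric.tendsto_nhds] at h ⊢
  intro ε hε
  filter_upwards [h (ε ^ n) (pow_pos hε n)] with a ha
  rw [Real.dist_eq, sub_zero, abs_pow] at ha
  rw [Real.dist_eq, sub_zero]
  exact (pow_lt_pow_iff_left₀ (abs_nonneg _) hε.le hn).1 ha

theorem eq_mul_exp_neg_integral_of_hasDerivAt {V a : ℝ → ℝ} (ha : Continuous a)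
    (hV : ∀ t, HasDerivAt V (-a t * V t) t) (t : ℝ) :
    V t = V 0 * exp (-∫ s in (0 : ℝ)..t, a s) := by
  set A : ℝ → ℝ := fun t => ∫ s in (0 : ℝ)..t, a s
  have hA : ∀ t, HasDerivAt A (a t) t := fun t =>
    (ha.integral_hasStrictDerivAt 0 t).hasDerivAt
  have hW : ∀ t, HasDerivAt (fun t => V t * exp (A t)) 0 t := fun t =>
    ((hV t).mul (hA t).exp).congr_deriv (by ring)
  have hW_const : V t * exp (A t) = V 0 * exp (A 0) :=
    is_const_of_deriv_eq_zero (fun t => (hW t).differentiableAt) (fun t => (hW t).deriv) t 0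
  have hA0 : A 0 = 0 := intervalIntegral.integral_same
  rw [hA0, exp_zero, mul_one] at hW_const
  rw [← hW_const, mul_assoc, ← exp_add, add_neg_cancel, exp_zero, mul_one]

theorem tendsto_zero_of_hasDerivAt_neg_mul {V a : ℝ → ℝ} (ha : Continuous a)
    (hV : ∀ t, HasDerivAt V (-a t * V t) t)
    (hdiv : Tendsto (fun t => ∫ s in (0 : ℝ)..t, a s) atTop atTop) :
    Tendsto V atTop (𝓝 0) := by
  have hexp : Tendsto (fun t => exp (-∫ s in (0 : ℝ)..t, a s)) atTop (𝓝 0) :=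
    tendsto_exp_atBot.comp (tendsto_neg_atTop_atBot.comp hdiv)
  simpa only [← eq_mul_exp_neg_integral_of_hasDerivAt ha hV, mul_zero]
    using hexp.const_mul (V 0)

noncomputable def lyapunov (p : ℝ × ℝ × ℝ) : ℝ :=
  (1 / 8) * (p.1 ^ 2 + p.2.1 ^ 2) ^ 2 + (1 / 2) * p.2.2 ^ 2

theorem fst_pow_four_le_lyapunov (p : ℝ × ℝ × ℝ) : p.1 ^ 4 ≤ 8 * lyapunov p := by
  unfold lyapunov
  nlinarith [sq_nonneg (p.1 * p.2.1), pow_nonneg (sq_nonneg p.2.1) 2, sq_nonneg p.2.2]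

theorem snd_fst_pow_four_le_lyapunov (p : ℝ × ℝ × ℝ) : p.2.1 ^ 4 ≤ 8 * lyapunov p := by
  unfold lyapunov
  nlinarith [sq_nonneg (p.1 * p.2.1), pow_nonneg (sq_nonneg p.1) 2, sq_nonneg p.2.2]

theorem snd_snd_sq_le_lyapunov (p : ℝ × ℝ × ℝ) : p.2.2 ^ 2 ≤ 2 * lyapunov p := by
  unfold lyapunov
  nlinarith [sq_nonneg (p.1 ^ 2 + p.2.1 ^ 2)]

theorem tendsto_zero_of_tendsto_lyapunov {α : Type*} {l : Filter α} {f : α → ℝ × ℝ × ℝ}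
    (h : Tendsto (fun a => lyapunov (f a)) l (𝓝 0)) :
    Tendsto f l (𝓝 ((0 : ℝ), (0 : ℝ), (0 : ℝ))) := by
  have h8 : Tendsto (fun a => 8 * lyapunov (f a)) l (𝓝 0) := by
    simpa only [mul_zero] using h.const_mul 8
  have h2 : Tendsto (fun a => 2 * lyapunov (f a)) l (𝓝 0) := by
    simpa only [mul_zero] using h.const_mul 2
  have hx₁ : Tendsto (fun a => (f a).1) l (𝓝 0) := .of_pow_nhds_zero four_ne_zero <|
    squeeze_zero (fun a => by positivity) (fun a => fst_pow_four_le_lyapunov (f a)) h8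
  have hx₂ : Tendsto (fun a => (f a).2.1) l (𝓝 0) := .of_pow_nhds_zero four_ne_zero <|
    squeeze_zero (fun a => by positivity) (fun a => snd_fst_pow_four_le_lyapunov (f a)) h8
  have hx₃ : Tendsto (fun a => (f a).2.2) l (𝓝 0) := .of_pow_nhds_zero two_ne_zero <|
    squeeze_zero (fun a => by positivity) (fun a => snd_snd_sq_le_lyapunov (f a)) h2
  exact hx₁.prodMk_nhds (hx₂.prodMk_nhds hx₃)

theorem hasDerivAt_lyapunov {x₁ x₂ x₃ : ℝ → ℝ} {t : ℝ}
    (h1 : HasDerivAt x₁ (-(x₂ t) * x₃ t) t)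
    (h2 : HasDerivAt x₂ (x₁ t * x₃ t - (1/2) * ((x₁ t)^2 + (x₂ t)^2) * x₂ t) t)
    (h3 : HasDerivAt x₃ (-(x₂ t)^2 * x₃ t) t) :
    HasDerivAt (fun t => lyapunov (x₁ t, x₂ t, x₃ t))
      (-(2 * x₂ t ^ 2) * lyapunov (x₁ t, x₂ t, x₃ t)) t := by
  refine ((((h1.pow 2).add (h2.pow 2)).pow 2).const_mul (1 / 8 : ℝ) |>.add
    ((h3.pow 2).const_mul (1 / 2 : ℝ))).congr_deriv ?_
  simp only [lyapunov, Pi.add_apply, Pi.pow_apply]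
  ring

/-- for `β = 0, γ = 1`, if `∫₀^∞ x₂² = ∞` then the state
converges to the origin. -/
theorem state_convergence_to_zero
    (x₁ x₂ x₃ : ℝ → ℝ)
    (h1 : ∀ t, HasDerivAt x₁ (-(x₂ t) * x₃ t) t)
    (h2 : ∀ t, HasDerivAt x₂
      (x₁ t * x₃ t - (1/2) * ((x₁ t)^2 + (x₂ t)^2) * x₂ t) t)
    (h3 : ∀ t, HasDerivAt x₃ (-(x₂ t)^2 * x₃ t) t)
    (hdiv : Filter.Tendsto (fun t => ∫ s in (0:ℝ)..t, (x₂ s)^2)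
      Filter.atTop Filter.atTop) :
    Filter.Tendsto (fun t => (x₁ t, x₂ t, x₃ t)) Filter.atTop
      (nhds ((0:ℝ), (0:ℝ), (0:ℝ))) := by
  have hx₂_cont : Continuous x₂ := continuous_iff_continuousAt.2 fun t => (h2 t).continuousAt
  have hdiv₂ : Tendsto (fun t => ∫ s in (0 : ℝ)..t, 2 * x₂ s ^ 2) atTop atTop := by
    simpa only [intervalIntegral.integral_const_mul] using hdiv.const_mul_atTop two_pos
  apply tendsto_zero_of_tendsto_lyapunov
  exact tendsto_zero_of_hasDerivAt_neg_mul (by fun_prop)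
    (fun t => hasDerivAt_lyapunov (h1 t) (h2 t) (h3 t)) hdiv₂
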